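/- arXiv:1802.02108 — 6 statements merged into one kernel-verified Lean document; each statement's English description precedes it below -/
import Mathlib

section
/- The map F: 𝕊ⁿ → ℝ^{2n} given by F(x₁,…,x_{n+1}) = (1/(1+x_{n+1}²))·(x₁, x₁x_{n+1}, …, xₙ, xₙx_{n+1}) is a Lagrangian immersion: the pullback F*ω of the standard symplectic form ω = Σᵢ dxᵢ ∧ dyᵢ on ℝ^{2n} ≅ ℂⁿ vanishes identically. -/
open Set

/-- The Whitney sphere immersion `F : 𝕊ⁿ ⊂ ℝ^{n+1} → ℂⁿ ≅ ℝ^{2n}`,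
`F(x)ᵢ = (1/(1+x_{n+1}²))·(xᵢ + i xᵢ x_{n+1})`. -/
noncomputable def whitneyMap (n : ℕ) (x : Fin (n + 1) → ℝ) : Fin n → ℂ := fun i =>
  (((1 + (x (Fin.last n)) ^ 2)⁻¹ * x i.castSucc : ℝ) : ℂ) *
    (1 + (x (Fin.last n) : ℂ) * Complex.I)

/-- The standard symplectic form `ω = Σᵢ dxᵢ ∧ dyᵢ` on `ℂⁿ`. -/
noncomputable def stdSymp (n : ℕ) (v w : Fin n → ℂ) : ℝ :=
  ∑ i, ((v i).re * (w i).im - (v i).im * (w i).re)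

/-!
Writing `x = (x', t)`, the Whitney map is `F(x', t) = γ(t) x'` with `γ(t) = (1 + i t)/(1 + t²)`.
For any differentiable curve `γ` the pullback of `ω` by such a map is
`Im(γ̄ γ') Σᵢ xᵢ dxᵢ ∧ dt = ½ Im(γ̄ γ') d|x'|² ∧ dt`, and on vectors tangent to a sphere
about the origin `d|x'|² = -2t dt`, so it vanishes there.
-/

open Complex ComplexConjugate

noncomputable def curveProduct (n : ℕ) (γ : ℝ → ℂ) (x : Fin (n + 1) → ℝ) :
    Fin n → ℂ := fun i => γ (x (Fin.last n)) * x i.castSucc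

section CurveProduct

variable {n : ℕ} {γ : ℝ → ℂ} {x : Fin (n + 1) → ℝ}

theorem fderiv_curveProduct_apply (hγ : DifferentiableAt ℝ γ (x (Fin.last n)))
    (v : Fin (n + 1) → ℝ) (i : Fin n) :
    fderiv ℝ (curveProduct n γ) x v i =
      v (Fin.last n) * x i.castSucc * deriv γ (x (Fin.last n)) +
        v i.castSucc * γ (x (Fin.last n)) := by
  have hF := hasFDerivAt_pi.2 fun j : Fin n =>
    (hγ.hasDerivAt.hasFDerivAt.comp x (hasFDerivAt_apply (𝕜 := ℝ) (Fin.last n) x)).mul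
      (ofRealCLM.hasFDerivAt.comp x (hasFDerivAt_apply (𝕜 := ℝ) j.castSucc x))
  rw [HasFDerivAt.fderiv (f := curveProduct n γ) hF]
  simp only [Function.comp_apply, ofRealCLM_apply, ContinuousLinearMap.coe_pi', add_apply,
    smul_apply, ContinuousLinearMap.comp_apply, ContinuousLinearMap.proj_apply, smul_eq_mul,
    ContinuousLinearMap.toSpanSingleton_apply, real_smul]
  ring

theorem stdSymp_fderiv_curveProduct (hγ : DifferentiableAt ℝ γ (x (Fin.last n)))
    (v w : Fin (n + 1) → ℝ) :
    stdSymp n (fderiv ℝ (curveProduct n γ) x v) (fderiv ℝ (curveProduct n γ) x w) =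
      (conj (γ (x (Fin.last n))) * deriv γ (x (Fin.last n))).im *
        ∑ i : Fin n,
          x i.castSucc * (v i.castSucc * w (Fin.last n) - w i.castSucc * v (Fin.last n)) := by
  simp only [stdSymp, fderiv_curveProduct_apply hγ, Finset.mul_sum]
  refine Finset.sum_congr rfl fun i _ => ?_
  simp only [add_re, add_im, mul_re, mul_im, ofReal_re, ofReal_im, conj_re, conj_im]
  ring

end CurveProduct

theorem sum_castSucc_mul_wedge_last_eq_zero {R : Type*} [CommRing R] {n : ℕ}
    {x v w : Fin (n + 1) → R} (hv : ∑ i, v i * x i = 0) (hw : ∑ i, w i * x i = 0) :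
    ∑ i : Fin n, x i.castSucc * (v i.castSucc * w (Fin.last n) - w i.castSucc * v (Fin.last n)) =
      0 := by
  have hfull : ∑ i, x i * (v i * w (Fin.last n) - w i * v (Fin.last n)) =
      (∑ i, v i * x i) * w (Fin.last n) - (∑ i, w i * x i) * v (Fin.last n) := by
    rw [Finset.sum_mul, Finset.sum_mul, ← Finset.sum_sub_distrib]
    exact Finset.sum_congr rfl fun i _ => by ring
  rwa [hv, hw, zero_mul, zero_mul, sub_zero, Fin.sum_univ_castSucc, mul_comm (w (Fin.last n)),
    sub_self, mul_zero, add_zero] at hfull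

theorem whitneyMap_eq_curveProduct (n : ℕ) :
    whitneyMap n = curveProduct n fun t => ((1 + t ^ 2)⁻¹ : ℝ) * (1 + t * I) := by
  ext x i
  simp only [whitneyMap, curveProduct, ofReal_mul]
  ring

theorem whitney_is_lagrangian_general (n : ℕ) (x : Fin (n + 1) → ℝ)
    (v w : Fin (n + 1) → ℝ)
    (hv : ∑ i, v i * x i = 0) (hw : ∑ i, w i * x i = 0) :
    stdSymp n (fderiv ℝ (whitneyMap n) x v) (fderiv ℝ (whitneyMap n) x w) = 0 := by
  have hγ : DifferentiableAt ℝ (fun t : ℝ => ((1 + t ^ 2)⁻¹ : ℝ) * (1 + t * I))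
      (x (Fin.last n)) := by
    fun_prop (disch := positivity)
  rw [whitneyMap_eq_curveProduct, stdSymp_fderiv_curveProduct hγ,
    sum_castSucc_mul_wedge_last_eq_zero hv hw, mul_zero]

theorem whitney_is_lagrangian (n : ℕ) (x : Fin (n + 1) → ℝ)
    (hx : ∑ i, (x i) ^ 2 = 1)
    (v w : Fin (n + 1) → ℝ)
    (hv : ∑ i, v i * x i = 0) (hw : ∑ i, w i * x i = 0) :
    stdSymp n (fderiv ℝ (whitneyMap n) x v) (fderiv ℝ (whitneyMap n) x w) = 0 :=
  whitney_is_lagrangian_general n x v w hv hw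
end

section
/- The Whitney sphere immersion F(x) = (1/(1+x_{n+1}²))·(x₁, x₁x_{n+1}, …, xₙ, xₙx_{n+1}) on 𝕊ⁿ fails to be injective only at the north and south poles: F(p) = F(q) with p ≠ q implies {p,q} = {(0,…,0,1), (0,…,0,-1)}, and both poles are mapped to the origin. -/
open Set

/-- The north pole `(0,…,0,1)` of `𝕊ⁿ`. -/
def northPole (n : ℕ) : Fin (n + 1) → ℝ := fun i => if i = Fin.last n then 1 else 0

/-!
Write `t = x_{n+1}`. The `i`-th component of the Whitney map has real part `x_i / (1 + t²)` and
imaginary part `t` times that. If some `p_i ≠ 0`, equal images therefore force equal heights `t`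
(the ratio of imaginary to real part), and then equal `p_i = q_i` from the real parts. Otherwise
the map vanishes at `p`, hence at `q`, so both points lie on the axis of the sphere, i.e. are poles.
-/

section WhitneyMap

variable {n : ℕ}

theorem whitneyMap_re (x : Fin (n + 1) → ℝ) (i : Fin n) :
    (whitneyMap n x i).re = (1 + x (Fin.last n) ^ 2)⁻¹ * x i.castSucc := by
  simp only [whitneyMap, Complex.re_ofReal_mul]
  simp

theorem whitneyMap_im (x : Fin (n + 1) → ℝ) (i : Fin n) :
    (whitneyMap n x i).im = x (Fin.last n) * (whitneyMap n x i).re := by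
  simp only [whitneyMap, Complex.re_ofReal_mul, Complex.im_ofReal_mul]
  simp
  ring

theorem whitneyMap_eq_zero_iff {x : Fin (n + 1) → ℝ} :
    whitneyMap n x = 0 ↔ ∀ i : Fin n, x i.castSucc = 0 := by
  have hpos : (1 + x (Fin.last n) ^ 2)⁻¹ ≠ 0 := by positivity
  refine ⟨fun h i => ?_, fun h => funext fun i => by simp [whitneyMap, h i]⟩
  have hre := congrArg Complex.re (congrFun h i)
  rw [whitneyMap_re, Pi.zero_apply, Complex.zero_re] at hre
  exact (mul_eq_zero.1 hre).resolve_left hpos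

theorem eq_of_whitneyMap_eq {p q : Fin (n + 1) → ℝ} (h : whitneyMap n p = whitneyMap n q)
    {i : Fin n} (hi : p i.castSucc ≠ 0) : p = q := by
  have hre : ∀ j, (whitneyMap n p j).re = (whitneyMap n q j).re := fun j => by rw [h]
  have hlast : p (Fin.last n) = q (Fin.last n) := by
    have hre_ne : (whitneyMap n p i).re ≠ 0 := by
      rw [whitneyMap_re]
      exact mul_ne_zero (by positivity) hi
    have him := congrArg Complex.im (congrFun h i)
    rw [whitneyMap_im, whitneyMap_im, ← hre i] at him
    exact mul_right_cancel₀ hre_ne him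
  funext j
  induction j using Fin.lastCases with
  | last => exact hlast
  | cast j =>
    have hj := hre j
    rw [whitneyMap_re, whitneyMap_re, ← hlast] at hj
    exact mul_left_cancel₀ (by positivity) hj

theorem northPole_castSucc (i : Fin n) : northPole n i.castSucc = 0 := by
  simp [northPole, (Fin.castSucc_lt_last i).ne]

theorem eq_northPole_or_eq_neg_northPole {x : Fin (n + 1) → ℝ}
    (hx : ∑ i, x i ^ 2 = 1) (h0 : ∀ i : Fin n, x i.castSucc = 0) :
    x = northPole n ∨ x = -northPole n := by
  have hlast : x (Fin.last n) ^ 2 = 1 := by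
    simpa [Fin.sum_univ_castSucc, h0] using hx
  rcases sq_eq_one_iff.1 hlast with h | h
  · left
    funext j
    induction j using Fin.lastCases with
    | last => simp [northPole, h]
    | cast j => rw [h0 j, northPole_castSucc]
  · right
    funext j
    induction j using Fin.lastCases with
    | last => simp [northPole, h]
    | cast j => rw [h0 j, Pi.neg_apply, northPole_castSucc, neg_zero]

end WhitneyMap

theorem whitney_double_point (n : ℕ) (p q : Fin (n + 1) → ℝ)
    (hp : ∑ i, (p i) ^ 2 = 1) (hq : ∑ i, (q i) ^ 2 = 1) :
    (p ≠ q → whitneyMap n p = whitneyMap n q →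
      ({p, q} : Set (Fin (n + 1) → ℝ)) = {northPole n, -northPole n}) ∧
    whitneyMap n (northPole n) = 0 ∧ whitneyMap n (-northPole n) = 0 := by
  have hS : ∀ i : Fin n, (-northPole n) i.castSucc = 0 := fun i => by
    rw [Pi.neg_apply, northPole_castSucc, neg_zero]
  refine ⟨fun hpq h => ?_, whitneyMap_eq_zero_iff.2 northPole_castSucc,
    whitneyMap_eq_zero_iff.2 hS⟩
  by_cases hp0 : ∀ i : Fin n, p i.castSucc = 0
  · have hq0 : ∀ i : Fin n, q i.castSucc = 0 :=
      whitneyMap_eq_zero_iff.1 (h ▸ whitneyMap_eq_zero_iff.2 hp0)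
    rcases eq_northPole_or_eq_neg_northPole hp hp0 with rfl | rfl <;>
      rcases eq_northPole_or_eq_neg_northPole hq hq0 with rfl | rfl
    all_goals first | exact absurd rfl hpq | rfl | exact Set.pair_comm _ _
  · push Not at hp0
    obtain ⟨i, hi⟩ := hp0
    exact absurd (eq_of_whitneyMap_eq h hi) hpq
end

section
/- Let f(s,t) satisfy ∂f/∂t = f''/(1+(f')²) + (n-1)·(arctan(f/s))' on s ∈ [-δ,δ] with f(·,t) odd and f(0,t)=0. Then α(s,t) = f(s,t)/s (extended by α(0,t) = f'(0,t)) is twice continuously differentiable in s and satisfies ∂α/∂t = α''/(1+(sα'+α)²) + (2/s)·α'/(1+(sα'+α)²) + (n-1)·(α'/s)·1/(1+α²). -/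
open Set Real MeasureTheory
open scoped ContDiff

/-- The quotient `α(s,t) = f(s,t)/s`, extended by `α(0,t) = f'(0,t)`. -/
noncomputable def quotExt (f : ℝ → ℝ → ℝ) (s t : ℝ) : ℝ :=
  if s = 0 then deriv (fun σ => f σ t) 0 else f s t / s

/-- Continuity of the parametric integral `x ↦ ∫₀¹ uᵏ g(ux) du`. -/
lemma auxCont (g : ℝ → ℝ) (hg : Continuous g) (k : ℕ) :
    Continuous (fun x : ℝ => ∫ u in (0:ℝ)..1, u ^ k * g (u * x)) := by
  apply intervalIntegral.continuous_parametric_intervalIntegral_of_continuous'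
    (f := fun (x : ℝ) (u : ℝ) => u ^ k * g (u * x)) (μ := volume) ?_ 0 1
  exact (continuous_snd.pow k).mul (hg.comp (continuous_snd.mul continuous_fst))

/-- Differentiation under the integral sign for `x ↦ ∫₀¹ uᵏ g(ux) du`. -/
lemma auxHasDerivAt (g : ℝ → ℝ) (hg : ContDiff ℝ ∞ g) (k : ℕ) (x₀ : ℝ) :
    HasDerivAt (fun x : ℝ => ∫ u in (0:ℝ)..1, u ^ k * g (u * x))
      (∫ u in (0:ℝ)..1, u ^ (k+1) * deriv g (u * x₀)) x₀ := by
  have hgd : Differentiable ℝ g := hg.differentiable (by norm_num)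
  have hg' : Continuous (deriv g) := (contDiff_infty_iff_deriv.mp hg).2.continuous
  obtain ⟨C, hC⟩ : ∃ C, ∀ y ∈ Icc (-(|x₀|+1)) (|x₀|+1), ‖deriv g y‖ ≤ C :=
    isCompact_Icc.exists_bound_of_continuousOn hg'.continuousOn
  have := intervalIntegral.hasDerivAt_integral_of_dominated_loc_of_deriv_le
    (𝕜 := ℝ) (μ := volume) (F := fun x u => u ^ k * g (u * x))
    (F' := fun x u => u ^ (k+1) * deriv g (u * x)) (x₀ := x₀) (a := 0) (b := 1)
    (bound := fun _ => C) (s := Metric.ball x₀ 1) (Metric.ball_mem_nhds x₀ one_pos) ?_ ?_ ?_ ?_ ?_ ?_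
  · exact this.2
  · filter_upwards with x
    exact (((continuous_pow k).mul (hg.continuous.comp
      (continuous_id.mul continuous_const)))).aestronglyMeasurable
  · exact (((continuous_pow k).mul (hg.continuous.comp
      (continuous_id.mul continuous_const)))).intervalIntegrable 0 1
  · exact (((continuous_pow (k+1)).mul (hg'.comp
      (continuous_id.mul continuous_const)))).aestronglyMeasurable
  · filter_upwards with u hu x hx
    have hu' : u ∈ Ioc (0:ℝ) 1 := by
      simpa [Set.uIoc_of_le (by norm_num : (0:ℝ) ≤ 1)] using hu
    have hux : u * x ∈ Icc (-(|x₀|+1)) (|x₀|+1) := by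
      have hx' : |x| ≤ |x₀| + 1 := by
        have h1 := abs_sub_abs_le_abs_sub x x₀
        have hb : |x - x₀| < 1 := by simpa [Real.dist_eq] using Metric.mem_ball.mp hx
        linarith
      have habs : |u * x| ≤ |x₀| + 1 := by
        rw [abs_mul]
        calc |u| * |x| ≤ 1 * (|x₀| + 1) := by
              apply mul_le_mul _ hx' (abs_nonneg x) (by norm_num)
              rw [abs_of_pos hu'.1]; exact hu'.2
          _ = |x₀| + 1 := one_mul _
      exact ⟨(abs_le.mp habs).1, (abs_le.mp habs).2⟩
    calc ‖u ^ (k+1) * deriv g (u * x)‖ = |u| ^ (k+1) * ‖deriv g (u * x)‖ := by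
          rw [norm_mul, norm_pow]; rfl
      _ ≤ 1 * ‖deriv g (u * x)‖ := by
          apply mul_le_mul_of_nonneg_right _ (norm_nonneg _)
          exact pow_le_one₀ (abs_nonneg u) (by rw [abs_of_pos hu'.1]; exact hu'.2)
      _ = ‖deriv g (u * x)‖ := one_mul _
      _ ≤ C := hC _ hux
  · exact intervalIntegrable_const
  · filter_upwards with u hu x hx
    have h1 : HasDerivAt (fun x => g (u * x)) (deriv g (u * x) * u) x := by
      have := ((hgd (u * x)).hasDerivAt).comp x ((hasDerivAt_id x).const_mul u)
      rw [mul_one] at this; exact this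
    have h2 := h1.const_mul (u ^ k)
    rw [show u ^ (k+1) * deriv g (u * x) = u ^ k * (deriv g (u * x) * u) by ring]
    exact h2

/-- `x ↦ ∫₀¹ uᵏ g(ux) du` is `C²` when `g` is smooth. -/
lemma auxContDiffTwo (g : ℝ → ℝ) (hg : ContDiff ℝ ∞ g) (k : ℕ) :
    ContDiff ℝ 2 (fun x : ℝ => ∫ u in (0:ℝ)..1, u ^ k * g (u * x)) := by
  have hg1 : ContDiff ℝ ∞ (deriv g) := (contDiff_infty_iff_deriv.mp hg).2
  have hg2 : ContDiff ℝ ∞ (deriv (deriv g)) := (contDiff_infty_iff_deriv.mp hg1).2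
  have hd0 : deriv (fun x : ℝ => ∫ u in (0:ℝ)..1, u ^ k * g (u * x)) =
      fun x : ℝ => ∫ u in (0:ℝ)..1, u ^ (k+1) * deriv g (u * x) :=
    funext fun x => (auxHasDerivAt g hg k x).deriv
  have hd1 : deriv (fun x : ℝ => ∫ u in (0:ℝ)..1, u ^ (k+1) * deriv g (u * x)) =
      fun x : ℝ => ∫ u in (0:ℝ)..1, u ^ (k+2) * deriv (deriv g) (u * x) :=
    funext fun x => (auxHasDerivAt (deriv g) hg1 (k+1) x).deriv
  rw [show (2 : WithTop ℕ∞) = 1 + 1 from by norm_num, contDiff_succ_iff_deriv]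
  refine ⟨fun x => (auxHasDerivAt g hg k x).differentiableAt, by simp, ?_⟩
  rw [hd0, contDiff_one_iff_deriv]
  refine ⟨fun x => (auxHasDerivAt (deriv g) hg1 (k+1) x).differentiableAt, ?_⟩
  rw [hd1]
  exact auxCont (deriv (deriv g)) hg2.continuous (k+2)

/-- Integral representation of the extended quotient. -/
lemma quotRepr (g : ℝ → ℝ) (hg : ContDiff ℝ ∞ g) (hg0 : g 0 = 0) (x : ℝ) :
    (if x = 0 then deriv g 0 else g x / x) = ∫ u in (0:ℝ)..1, u ^ 0 * deriv g (u * x) := by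
  have hgd : Differentiable ℝ g := hg.differentiable (by norm_num)
  have hg' : Continuous (deriv g) := (contDiff_infty_iff_deriv.mp hg).2.continuous
  simp only [pow_zero, one_mul]
  rcases eq_or_ne x 0 with h | h
  · simp [h]
  · rw [if_neg h]
    have h1 : (∫ u in (0:ℝ)..1, deriv g (u * x)) = x⁻¹ • ∫ y in 0*x..1*x, deriv g y :=
      intervalIntegral.integral_comp_mul_right (deriv g) h
    rw [h1, show (0:ℝ)*x = 0 by ring, show (1:ℝ)*x = x by ring]
    rw [intervalIntegral.integral_deriv_eq_sub (fun y _ => hgd y)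
      (hg'.intervalIntegrable 0 x)]
    rw [hg0, sub_zero, smul_eq_mul, inv_mul_eq_div]

theorem quotient_pde (n : ℕ) (δ T : ℝ) (hδ : 0 < δ) (hT : 0 < T)
    (f : ℝ → ℝ → ℝ) (hf : ContDiff ℝ (⊤ : ℕ∞) (Function.uncurry f))
    (hodd : ∀ s t : ℝ, f (-s) t = -f s t)
    (hpde : ∀ t ∈ Icc (0 : ℝ) T, ∀ s ∈ Icc (-δ) δ, s ≠ 0 →
      deriv (f s) t =
        deriv (deriv (fun σ => f σ t)) s / (1 + (deriv (fun σ => f σ t) s) ^ 2) +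
          ((n : ℝ) - 1) * deriv (fun σ => Real.arctan (f σ t / σ)) s) :
    ∀ t ∈ Icc (0 : ℝ) T,
      ContDiffOn ℝ 2 (fun s => quotExt f s t) (Icc (-δ) δ) ∧
      ∀ s ∈ Icc (-δ) δ, s ≠ 0 →
        deriv (fun τ => quotExt f s τ) t =
          deriv (deriv (fun σ => quotExt f σ t)) s /
              (1 + (s * deriv (fun σ => quotExt f σ t) s + quotExt f s t) ^ 2) +
            (2 / s) * deriv (fun σ => quotExt f σ t) s /
              (1 + (s * deriv (fun σ => quotExt f σ t) s + quotExt f s t) ^ 2) +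
            ((n : ℝ) - 1) * (deriv (fun σ => quotExt f σ t) s / s) *
              (1 / (1 + (quotExt f s t) ^ 2)) := by
  intro t ht
  have hg : ContDiff ℝ ∞ (fun σ => f σ t) :=
    (hf.of_le (by simp)).comp (contDiff_id.prodMk contDiff_const)
  have hgd : Differentiable ℝ (fun σ => f σ t) := hg.differentiable (by norm_num)
  have hg1 : ContDiff ℝ ∞ (deriv (fun σ => f σ t)) := (contDiff_infty_iff_deriv.mp hg).2
  have hgd' : Differentiable ℝ (deriv (fun σ => f σ t)) := hg1.differentiable (by norm_num)
  have hg0 : f 0 t = 0 := by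
    have h := hodd 0 t; rw [neg_zero] at h; linarith
  have hrepr : (fun s => quotExt f s t) =
      fun x : ℝ => ∫ u in (0:ℝ)..1, u ^ 0 * deriv (fun σ => f σ t) (u * x) := by
    funext x
    exact quotRepr (fun σ => f σ t) hg hg0 x
  constructor
  · rw [hrepr]
    exact (auxContDiffTwo (deriv (fun σ => f σ t)) hg1 0).contDiffOn
  · intro s hs hs0
    have hnhds : ∀ σ : ℝ, σ ≠ 0 →
        (fun σ' => quotExt f σ' t) =ᶠ[nhds σ] fun σ' => f σ' t / σ' := by
      intro σ hσ
      filter_upwards [eventually_ne_nhds hσ] with σ' hσ'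
      simp [quotExt, hσ']
    have hqd : ∀ σ : ℝ, σ ≠ 0 → HasDerivAt (fun σ' => f σ' t / σ')
        ((deriv (fun σ' => f σ' t) σ * σ - f σ t * 1) / σ ^ 2) σ := by
      intro σ hσ
      exact ((hgd σ).hasDerivAt).div (hasDerivAt_id σ) hσ
    have hA' : ∀ σ : ℝ, σ ≠ 0 → deriv (fun σ' => quotExt f σ' t) σ =
        (deriv (fun σ' => f σ' t) σ * σ - f σ t * 1) / σ ^ 2 := by
      intro σ hσ
      exact (((hqd σ hσ).congr_of_eventuallyEq (hnhds σ hσ))).deriv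
    have hev2 : deriv (fun σ' => quotExt f σ' t) =ᶠ[nhds s]
        fun σ => (deriv (fun σ' => f σ' t) σ * σ - f σ t * 1) / σ ^ 2 := by
      filter_upwards [eventually_ne_nhds hs0] with σ hσ
      exact hA' σ hσ
    have hq2 : HasDerivAt
        (fun σ => (deriv (fun σ' => f σ' t) σ * σ - f σ t * 1) / σ ^ 2)
        (((deriv (deriv (fun σ' => f σ' t)) s * s + deriv (fun σ' => f σ' t) s * 1
            - deriv (fun σ' => f σ' t) s * 1) * s ^ 2 -
          (deriv (fun σ' => f σ' t) s * s - f s t * 1) * (2 * s ^ 1)) / (s ^ 2) ^ 2) s := by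
      have hnum : HasDerivAt (fun σ => deriv (fun σ' => f σ' t) σ * σ - f σ t * 1)
          (deriv (deriv (fun σ' => f σ' t)) s * s + deriv (fun σ' => f σ' t) s * 1
            - deriv (fun σ' => f σ' t) s * 1) s :=
        (((hgd' s).hasDerivAt).mul (hasDerivAt_id s)).sub
          (((hgd s).hasDerivAt).mul_const 1)
      have hden : HasDerivAt (fun σ : ℝ => σ ^ 2) ((2:ℕ) * s ^ 1) s := by
        simpa using hasDerivAt_pow 2 s
      have h := hnum.div hden (pow_ne_zero 2 hs0)
      rw [show ((2:ℕ):ℝ) = 2 by norm_num] at h; exact h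
    have hA'' : deriv (deriv (fun σ' => quotExt f σ' t)) s =
        (((deriv (deriv (fun σ' => f σ' t)) s * s + deriv (fun σ' => f σ' t) s * 1
            - deriv (fun σ' => f σ' t) s * 1) * s ^ 2 -
          (deriv (fun σ' => f σ' t) s * s - f s t * 1) * (2 * s ^ 1)) / (s ^ 2) ^ 2) :=
      ((hq2.congr_of_eventuallyEq hev2)).deriv
    have harc : deriv (fun σ => Real.arctan (f σ t / σ)) s =
        1 / (1 + (f s t / s) ^ 2) *
          ((deriv (fun σ' => f σ' t) s * s - f s t * 1) / s ^ 2) := by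
      have h : HasDerivAt (fun σ => Real.arctan (f σ t / σ))
          (1 / (1 + (f s t / s) ^ 2) *
            ((deriv (fun σ' => f σ' t) s * s - f s t * 1) / s ^ 2)) s :=
        (hqd s hs0).arctan
      exact h.deriv
    have hLHS : deriv (fun τ => quotExt f s τ) t = deriv (f s) t / s := by
      have h1 : (fun τ => quotExt f s τ) = fun τ => f s τ / s :=
        funext fun τ => by simp [quotExt, hs0]
      rw [h1, deriv_div_const]
    have hqs : quotExt f s t = f s t / s := by simp [quotExt, hs0]
    have h1b : (1:ℝ) + (deriv (fun σ' => f σ' t) s) ^ 2 ≠ 0 := by positivity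
    rw [hLHS, hpde t ht s hs hs0, harc, hA' s hs0, hA'', hqs]
    have key : s * ((deriv (fun σ' => f σ' t) s * s - f s t * 1) / s ^ 2) + f s t / s =
        deriv (fun σ' => f σ' t) s := by
      field_simp
      ring
    rw [key]
    set w : ℝ := 1 / (1 + (f s t / s) ^ 2) with hw
    field_simp
    ring
end

section
/- Let u: [-δ,δ] × [0,T] → ℝ be C² in s and C¹ in t, even in s, satisfying ∂u/∂t = C₁² u'' + C₂ u' + C₃ u + C₄²·(u'/s) (with u'/s interpreted as u''(0) at s = 0 via L'Hôpital), where C₁, C₂, C₃, C₄ are continuous bounded functions. If u(·,0) > 0 on [-δ,δ] and u > 0 on {-δ,δ} × [0,T], then u > 0 on [-δ,δ] × [0,T]. -/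
/-!
Let `c > 0` bound `u` from below on the parabolic boundary and `|C₃| ≤ M`. The function
`w = e^{-Mt} (u - c e^{-(M+1)t})` is nonnegative on the parabolic boundary, and the weight makes
the zeroth-order coefficient of its equation nonpositive, while the barrier `c e^{-(M+1)t}` adds a
strictly positive source term. Hence at a negative minimum of `w` in the interior we would have
`w_t > C₁² w'' + C₂ w' + C₄² w'/s ≥ 0` (as `w' = 0` and `w'' ≥ 0` there, also for the term read as
`w''(0)` at `s = 0`), while `w_t ≤ 0` because the minimum is also one in `t` from the left.
So `w ≥ 0`, that is `u ≥ c e^{-(M+1)t} > 0`.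
-/

open Set Topology Real

theorem IsLocalMin.deriv_deriv_nonneg {f : ℝ → ℝ} {a : ℝ} (hmin : IsLocalMin f a)
    (hf : ContinuousAt f a) : 0 ≤ deriv (deriv f) a := by
  by_contra! hneg
  have hmax : IsLocalMax f a := isLocalMax_of_deriv_deriv_neg hneg hmin.deriv_eq_zero hf
  have hconst : f =ᶠ[𝓝 a] fun _ => f a := by
    filter_upwards [hmin, hmax] with x hx₁ hx₂ using le_antisymm hx₂ hx₁
  have : deriv (deriv f) a = 0 := by
    rw [hconst.deriv.deriv_eq]
    simp
  exact hneg.ne this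

theorem IsMinOn.deriv_nonpos_of_Icc {f : ℝ → ℝ} {a b : ℝ} (hab : a < b)
    (hmin : IsMinOn f (Icc a b) b) : deriv f b ≤ 0 := by
  by_cases hf : DifferentiableAt ℝ f b
  · have hcone : a - b ∈ posTangentConeAt (Icc a b) b :=
      sub_mem_posTangentConeAt_of_segment_subset (by
        rw [segment_eq_Icc', min_eq_right hab.le, max_eq_left hab.le])
    have := hmin.localize.hasFDerivWithinAt_nonneg hf.hasDerivAt.hasFDerivAt.hasFDerivWithinAt hcone
    rw [ContinuousLinearMap.toSpanSingleton_apply, smul_eq_mul] at this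
    nlinarith
  · exact (deriv_zero_of_not_differentiableAt hf).le

noncomputable def degenerateOp (C₁ C₂ C₄ w : ℝ → ℝ → ℝ) (s t : ℝ) : ℝ :=
  C₁ s t ^ 2 * deriv (deriv fun σ => w σ t) s + C₂ s t * deriv (fun σ => w σ t) s +
    C₄ s t ^ 2 * (if s = 0 then deriv (deriv fun σ => w σ t) 0 else deriv (fun σ => w σ t) s / s)

section degenerateOp

variable {C₁ C₂ C₄ w : ℝ → ℝ → ℝ}

theorem degenerateOp_mul_sub (a b : ℝ → ℝ) (s t : ℝ) :
    degenerateOp C₁ C₂ C₄ (fun s t => a t * (w s t - b t)) s t =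
      a t * degenerateOp C₁ C₂ C₄ w s t := by
  have hd : (deriv fun σ => a t * (w σ t - b t)) = fun σ => a t * deriv (fun σ => w σ t) σ := by
    rw [deriv_const_mul_field']
    simp only [deriv_sub_const]
  simp only [degenerateOp, hd, deriv_const_mul_field']
  split_ifs <;> ring

theorem degenerateOp_nonneg_of_isLocalMin {s t : ℝ} (hmin : IsLocalMin (fun σ => w σ t) s)
    (hw : ContinuousAt (fun σ => w σ t) s) : 0 ≤ degenerateOp C₁ C₂ C₄ w s t := by
  have hw'' := hmin.deriv_deriv_nonneg hw
  have hdeg : 0 ≤ if s = 0 then deriv (deriv fun σ => w σ t) 0 else 0 / s := by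
    split_ifs with hs
    · exact hs ▸ hw''
    · rw [zero_div]
  rw [degenerateOp, hmin.deriv_eq_zero, mul_zero, add_zero]
  exact add_nonneg (mul_nonneg (sq_nonneg _) hw'') (mul_nonneg (sq_nonneg _) hdeg)

theorem nonneg_of_degenerateOp_lt_deriv {δ T : ℝ}
    (hw : ContinuousOn (Function.uncurry w) (Icc (-δ) δ ×ˢ Icc 0 T))
    (hsuper : ∀ s ∈ Ioo (-δ) δ, ∀ t ∈ Ioc 0 T, w s t < 0 →
      degenerateOp C₁ C₂ C₄ w s t < deriv (fun τ => w s τ) t)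
    (hinit : ∀ s ∈ Icc (-δ) δ, 0 ≤ w s 0)
    (hbdry : ∀ t ∈ Icc 0 T, 0 ≤ w (-δ) t ∧ 0 ≤ w δ t) :
    ∀ s ∈ Icc (-δ) δ, ∀ t ∈ Icc 0 T, 0 ≤ w s t := by
  by_contra! ⟨s, hs, t, ht, hneg⟩
  obtain ⟨⟨s₀, t₀⟩, ⟨hs₀, ht₀⟩, hmin⟩ :=
    (isCompact_Icc.prod isCompact_Icc).exists_isMinOn ⟨(s, t), hs, ht⟩ hw
  have hw₀ : w s₀ t₀ < 0 := (hmin (mk_mem_prod hs ht)).trans_lt hneg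
  have hs₀' : s₀ ∈ Ioo (-δ) δ := by
    refine ⟨hs₀.1.lt_of_ne ?_, hs₀.2.lt_of_ne ?_⟩ <;> rintro rfl
    exacts [(hbdry t₀ ht₀).1.not_gt hw₀, (hbdry t₀ ht₀).2.not_gt hw₀]
  have ht₀' : t₀ ∈ Ioc 0 T := by
    refine ⟨ht₀.1.lt_of_ne ?_, ht₀.2⟩
    rintro rfl
    exact (hinit s₀ hs₀).not_gt hw₀
  have hspace : IsLocalMin (fun σ => w σ t₀) s₀ := by
    filter_upwards [Icc_mem_nhds hs₀'.1 hs₀'.2] with σ hσ using hmin (mk_mem_prod hσ ht₀)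
  have hslice : ContinuousAt (fun σ => w σ t₀) s₀ :=
    (hw.comp (continuous_id.prodMk continuous_const).continuousOn
      fun σ hσ => mk_mem_prod hσ ht₀).continuousAt (Icc_mem_nhds hs₀'.1 hs₀'.2)
  have htime : IsMinOn (fun τ => w s₀ τ) (Icc 0 t₀) t₀ :=
    fun τ hτ => hmin (mk_mem_prod hs₀ ⟨hτ.1, hτ.2.trans ht₀.2⟩)
  linarith [degenerateOp_nonneg_of_isLocalMin (C₁ := C₁) (C₂ := C₂) (C₄ := C₄) hspace hslice,
    htime.deriv_nonpos_of_Icc ht₀'.1, hsuper s₀ hs₀' t₀ ht₀' hw₀]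

end degenerateOp

theorem degenerateOp_lt_deriv_of_lt_barrier {C₁ C₂ C₃ C₄ u : ℝ → ℝ → ℝ} {M c s t : ℝ}
    (hM : |C₃ s t| ≤ M) (hc : 0 < c) (hu : DifferentiableAt ℝ (fun τ => u s τ) t)
    (hpde : deriv (fun τ => u s τ) t = degenerateOp C₁ C₂ C₄ u s t + C₃ s t * u s t)
    (hlt : u s t < c * exp (-(M + 1) * t)) :
    degenerateOp C₁ C₂ C₄ (fun s t => exp (-M * t) * (u s t - c * exp (-(M + 1) * t))) s t <
      deriv (fun τ => exp (-M * τ) * (u s τ - c * exp (-(M + 1) * τ))) t := by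
  have hexp (k : ℝ) : HasDerivAt (fun τ => exp (k * τ)) (exp (k * t) * k) t := by
    simpa using ((hasDerivAt_id t).const_mul k).exp
  have hw : HasDerivAt (fun τ => exp (-M * τ) * (u s τ - c * exp (-(M + 1) * τ))) _ t :=
    (hexp _).mul (hu.hasDerivAt.sub ((hexp _).const_mul c))
  rw [hw.deriv,
    degenerateOp_mul_sub (fun τ => exp (-M * τ)) (fun τ => c * exp (-(M + 1) * τ))]
  have hC₃ := abs_le.1 hM
  have hgap : 0 < (C₃ s t - M) * (u s t - c * exp (-(M + 1) * t)) +
      (C₃ s t + M + 1) * (c * exp (-(M + 1) * t)) := by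
    have := mul_nonneg_of_nonpos_of_nonpos (sub_nonpos.2 hC₃.2) (sub_neg.2 hlt).le
    have := mul_pos (by linarith : 0 < C₃ s t + M + 1) (mul_pos hc (exp_pos (-(M + 1) * t)))
    linarith
  have := mul_pos (exp_pos (-M * t)) hgap
  rw [hpde]
  linear_combination this

def parabolicBoundary (δ T : ℝ) : Set (ℝ × ℝ) :=
  Icc (-δ) δ ×ˢ {0} ∪ {-δ, δ} ×ˢ Icc 0 T

theorem isCompact_parabolicBoundary (δ T : ℝ) : IsCompact (parabolicBoundary δ T) :=
  (isCompact_Icc.prod isCompact_singleton).union ((toFinite _).isCompact.prod isCompact_Icc)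

theorem degenerate_maximum_principle_general (δ T : ℝ)
    (u C₁ C₂ C₃ C₄ : ℝ → ℝ → ℝ)
    (hu_t : ∀ s ∈ Icc (-δ) δ, ContDiff ℝ 1 (fun t => u s t))
    (hu_cont : Continuous (Function.uncurry u))
    (hC_bdd : ∃ M : ℝ, ∀ s ∈ Icc (-δ) δ, ∀ t ∈ Icc (0 : ℝ) T,
      |C₁ s t| ≤ M ∧ |C₂ s t| ≤ M ∧ |C₃ s t| ≤ M ∧ |C₄ s t| ≤ M)
    (hpde : ∀ s ∈ Icc (-δ) δ, ∀ t ∈ Icc (0 : ℝ) T,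
      deriv (fun τ => u s τ) t =
        (C₁ s t) ^ 2 * deriv (deriv (fun σ => u σ t)) s +
          C₂ s t * deriv (fun σ => u σ t) s + C₃ s t * u s t +
          (C₄ s t) ^ 2 *
            (if s = 0 then deriv (deriv (fun σ => u σ t)) 0
              else deriv (fun σ => u σ t) s / s))
    (hinit : ∀ s ∈ Icc (-δ) δ, 0 < u s 0)
    (hbdry : ∀ t ∈ Icc (0 : ℝ) T, 0 < u δ t ∧ 0 < u (-δ) t) :
    ∀ s ∈ Icc (-δ) δ, ∀ t ∈ Icc (0 : ℝ) T, 0 < u s t := by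
  obtain ⟨M, hM⟩ := hC_bdd
  have hC₃ : ∀ s ∈ Icc (-δ) δ, ∀ t ∈ Icc (0 : ℝ) T, |C₃ s t| ≤ |M| :=
    fun s hs t ht => (hM s hs t ht).2.2.1.trans (le_abs_self M)
  obtain ⟨c, hc, hcu⟩ :=
    (isCompact_parabolicBoundary δ T).exists_forall_le' hu_cont.continuousOn (a := 0) <| by
      rintro ⟨s, t⟩ (⟨hs, rfl⟩ | ⟨rfl | rfl, ht⟩)
      exacts [hinit s hs, (hbdry t ht).2, (hbdry t ht).1]
  have hw_bdry {s t : ℝ} (hst : (s, t) ∈ parabolicBoundary δ T) (ht : 0 ≤ t) :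
      0 ≤ exp (-|M| * t) * (u s t - c * exp (-(|M| + 1) * t)) := by
    have hbarrier : c * exp (-(|M| + 1) * t) ≤ c :=
      mul_le_of_le_one_right hc.le (exp_le_one_iff.2 (by nlinarith [abs_nonneg M]))
    exact mul_nonneg (exp_pos _).le (sub_nonneg.2 (hbarrier.trans (hcu _ hst)))
  have hw_super (s : ℝ) (hs : s ∈ Icc (-δ) δ) (t : ℝ) (ht : t ∈ Icc 0 T)
      (hneg : exp (-|M| * t) * (u s t - c * exp (-(|M| + 1) * t)) < 0) :=
    degenerateOp_lt_deriv_of_lt_barrier (C₁ := C₁) (C₂ := C₂) (C₄ := C₄) (hC₃ s hs t ht) hc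
      ((hu_t s hs).differentiable one_ne_zero t)
      ((hpde s hs t ht).trans (by rw [degenerateOp]; ring))
      (sub_neg.1 (neg_of_mul_neg_right hneg (exp_pos _).le))
  have hw := nonneg_of_degenerateOp_lt_deriv (by fun_prop)
    (fun s hs t ht => hw_super s (Ioo_subset_Icc_self hs) t (Ioc_subset_Icc_self ht))
    (fun s hs => hw_bdry (Or.inl ⟨hs, rfl⟩) le_rfl)
    (fun t ht => ⟨hw_bdry (Or.inr ⟨Or.inl rfl, ht⟩) ht.1, hw_bdry (Or.inr ⟨Or.inr rfl, ht⟩) ht.1⟩)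
  intro s hs t ht
  have := nonneg_of_mul_nonneg_right (hw s hs t ht) (exp_pos _)
  linarith [mul_pos hc (exp_pos (-(|M| + 1) * t))]

/-- Maximum principle for the degenerate parabolic equation
`∂u/∂t = C₁² u'' + C₂ u' + C₃ u + C₄²·u'/s` satisfied by even functions. -/
theorem degenerate_maximum_principle (δ T : ℝ) (hδ : 0 < δ) (hT : 0 < T)
    (u C₁ C₂ C₃ C₄ : ℝ → ℝ → ℝ)
    (hu_s : ∀ t ∈ Icc (0 : ℝ) T, ContDiff ℝ 2 (fun s => u s t))
    (hu_t : ∀ s ∈ Icc (-δ) δ, ContDiff ℝ 1 (fun t => u s t))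
    (hu_cont : Continuous (Function.uncurry u))
    (hC_cont : Continuous (Function.uncurry C₁) ∧ Continuous (Function.uncurry C₂) ∧
      Continuous (Function.uncurry C₃) ∧ Continuous (Function.uncurry C₄))
    (hC_bdd : ∃ M : ℝ, ∀ s ∈ Icc (-δ) δ, ∀ t ∈ Icc (0 : ℝ) T,
      |C₁ s t| ≤ M ∧ |C₂ s t| ≤ M ∧ |C₃ s t| ≤ M ∧ |C₄ s t| ≤ M)
    (heven : ∀ s t : ℝ, u (-s) t = u s t)
    (hpde : ∀ s ∈ Icc (-δ) δ, ∀ t ∈ Icc (0 : ℝ) T,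
      deriv (fun τ => u s τ) t =
        (C₁ s t) ^ 2 * deriv (deriv (fun σ => u σ t)) s +
          C₂ s t * deriv (fun σ => u σ t) s + C₃ s t * u s t +
          (C₄ s t) ^ 2 *
            (if s = 0 then deriv (deriv (fun σ => u σ t)) 0
              else deriv (fun σ => u σ t) s / s))
    (hinit : ∀ s ∈ Icc (-δ) δ, 0 < u s 0)
    (hbdry : ∀ t ∈ Icc (0 : ℝ) T, 0 < u δ t ∧ 0 < u (-δ) t) :
    ∀ s ∈ Icc (-δ) δ, ∀ t ∈ Icc (0 : ℝ) T, 0 < u s t :=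
  degenerate_maximum_principle_general δ T u C₁ C₂ C₃ C₄ hu_t hu_cont hC_bdd hpde hinit hbdry
end

section
/- Let γ: I → ℂ be a regular curve and let L ⊂ ℂⁿ be the equivariant Lagrangian L = {(γ(u)G₁(x), …, γ(u)Gₙ(x)) : x ∈ 𝕊^{n-1}}. Then the restriction of the holomorphic volume form Ω = dz₁ ∧ ⋯ ∧ dzₙ to L equals e^{iθ}·vol_L with e^{iθ} = (γ'(u)/|γ'(u)|) · (γ(u)/|γ(u)|)^{n-1}, where the products are complex multiplication. -/
open Set Real Complex

/-- The Lagrangian angle identity `Ω|_L = e^{iθ} vol_L` with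
`e^{iθ} = (γ'/|γ'|)·(γ/|γ|)^{n-1}` for the equivariant Lagrangian associated to
the curve `γ`, verified for `n = 2` at the point with spherical parameter `φ`:
the tangent vectors `v = γ'(u)·(cos φ, sin φ)` and `w = γ(u)·(-sin φ, cos φ)` are
orthogonal with `|v| = |γ'(u)|`, `|w| = |γ(u)|`, and
`Ω(v/|v|, w/|w|) = (γ'/|γ'|)·(γ/|γ|)`. -/
theorem equivariant_lagrangian_angle (γ : ℝ → ℂ) (hγ : ContDiff ℝ (⊤ : ℕ∞) γ) (u φ : ℝ)
    (h0 : γ u ≠ 0) (hreg : deriv γ u ≠ 0) :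
    ((deriv γ u * Real.cos φ) * ((starRingEnd ℂ) (-(γ u) * Real.sin φ)) +
        (deriv γ u * Real.sin φ) * ((starRingEnd ℂ) (γ u * Real.cos φ))).re = 0 ∧
    ((deriv γ u * Real.cos φ) * ((starRingEnd ℂ) (deriv γ u * Real.cos φ)) +
        (deriv γ u * Real.sin φ) * ((starRingEnd ℂ) (deriv γ u * Real.sin φ))).re
      = ‖deriv γ u‖ ^ 2 ∧
    ((-(γ u) * Real.sin φ) * ((starRingEnd ℂ) (-(γ u) * Real.sin φ)) +
        (γ u * Real.cos φ) * ((starRingEnd ℂ) (γ u * Real.cos φ))).re = ‖γ u‖ ^ 2 ∧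
    ((‖deriv γ u‖ : ℂ) * (‖γ u‖ : ℂ))⁻¹ *
        ((deriv γ u * Real.cos φ) * (γ u * Real.cos φ) -
          (deriv γ u * Real.sin φ) * (-(γ u) * Real.sin φ))
      = (deriv γ u / (‖deriv γ u‖ : ℂ)) * (γ u / (‖γ u‖ : ℂ)) ^ (2 - 1) := by
  have hc2s2 : (Real.cos φ : ℂ) ^ 2 + (Real.sin φ : ℂ) ^ 2 = 1 := by
    norm_cast
    rw [add_comm]
    exact Real.sin_sq_add_cos_sq φ
  have hn1 : (‖deriv γ u‖ : ℂ) ≠ 0 := by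
    simpa using norm_ne_zero_iff.mpr hreg
  have hn2 : (‖γ u‖ : ℂ) ≠ 0 := by
    simpa using norm_ne_zero_iff.mpr h0
  refine ⟨?_, ?_, ?_, ?_⟩
  · simp only [map_mul, map_neg, Complex.conj_ofReal]
    ring_nf
    simp [Complex.mul_re, Complex.mul_im]
  · have : (deriv γ u * Real.cos φ) * ((starRingEnd ℂ) (deriv γ u * Real.cos φ)) +
        (deriv γ u * Real.sin φ) * ((starRingEnd ℂ) (deriv γ u * Real.sin φ))
        = deriv γ u * (starRingEnd ℂ) (deriv γ u) := by
      simp only [map_mul, Complex.conj_ofReal]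
      linear_combination (deriv γ u * (starRingEnd ℂ) (deriv γ u)) * hc2s2
    rw [this, Complex.mul_conj]
    simp [Complex.normSq_eq_norm_sq, ← Complex.ofReal_pow, Complex.ofReal_re]
  · have : (-(γ u) * Real.sin φ) * ((starRingEnd ℂ) (-(γ u) * Real.sin φ)) +
        (γ u * Real.cos φ) * ((starRingEnd ℂ) (γ u * Real.cos φ))
        = γ u * (starRingEnd ℂ) (γ u) := by
      simp only [map_mul, map_neg, Complex.conj_ofReal]
      linear_combination (γ u * (starRingEnd ℂ) (γ u)) * hc2s2
    rw [this, Complex.mul_conj]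
    simp [Complex.normSq_eq_norm_sq, ← Complex.ofReal_pow, Complex.ofReal_re]
  · have h : (deriv γ u * Real.cos φ) * (γ u * Real.cos φ) -
        (deriv γ u * Real.sin φ) * (-(γ u) * Real.sin φ) = deriv γ u * γ u := by
      linear_combination (deriv γ u * γ u) * hc2s2
    rw [h]
    norm_num
    field_simp
end

section
/- Suppose for almost every s in an interval, a sequence of curves γˢᵢ converges in C¹_loc(ℝ²∖{0}) with ∫_{γˢᵢ ∩ A(1/η, η, 0)} (|k⃗|² + |γ⊥|²) dH¹ → 0 for every η > 0, where A(1/η, η, 0) is the annulus of inner radius η and outer radius 1/η about 0. Then every C¹_loc limit of the sequence in ℝ²∖{0} is a union of straight line segments lying on lines through the origin. -/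
open Set Real intervalIntegral Filter Topology

noncomputable def cdot (z w : ℂ) : ℝ := z.re * w.re + z.im * w.im

noncomputable def nuC (γ : ℝ → ℂ) (s : ℝ) : ℂ :=
  (‖deriv γ s‖)⁻¹ • (Complex.I * deriv γ s)

/-- Curvature vector of `γ`. -/
noncomputable def curvC (γ : ℝ → ℂ) (s : ℝ) : ℂ :=
  (‖deriv γ s‖)⁻¹ • deriv (fun σ => (‖deriv γ σ‖)⁻¹ • deriv γ σ) s

/-- Normal projection `γ⊥` of the position vector. -/
noncomputable def perpC (γ : ℝ → ℂ) (s : ℝ) : ℂ := (cdot (γ s) (nuC γ s)) • nuC γ s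

/- ### Auxiliary definitions -/

noncomputable def curvF (z w : ℂ) : ℂ :=
  (‖z‖)⁻¹ • ((‖z‖)⁻¹ • w + (-(cdot z w) / ‖z‖ ^ 3) • z)

noncomputable def perpF (w z : ℂ) : ℂ :=
  (cdot w ((‖z‖)⁻¹ • (Complex.I * z))) • ((‖z‖)⁻¹ • (Complex.I * z))

noncomputable def phiF (p : ℂ × ℂ × ℂ) : ℝ :=
  (‖curvF p.2.1 p.2.2‖ ^ 2 + ‖perpF p.1 p.2.1‖ ^ 2) * ‖p.2.1‖

lemma hasDerivAt_T (g : ℝ → ℂ) (hg : Differentiable ℝ g) (s : ℝ) (hs : g s ≠ 0) :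
    HasDerivAt (fun σ => (‖g σ‖)⁻¹ • g σ)
      ((‖g s‖)⁻¹ • deriv g s + (-(cdot (g s) (deriv g s)) / ‖g s‖ ^ 3) • g s) s := by
  have hgd : HasDerivAt g (deriv g s) s := (hg s).hasDerivAt
  have hre : HasDerivAt (fun σ => (g σ).re) ((deriv g s).re) s :=
    (Complex.reCLM.hasFDerivAt.comp_hasDerivAt s hgd)
  have him : HasDerivAt (fun σ => (g σ).im) ((deriv g s).im) s :=
    (Complex.imCLM.hasFDerivAt.comp_hasDerivAt s hgd)
  have hq : HasDerivAt (fun σ => (g σ).re * (g σ).re + (g σ).im * (g σ).im)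
      ((deriv g s).re * (g s).re + (g s).re * (deriv g s).re +
        ((deriv g s).im * (g s).im + (g s).im * (deriv g s).im)) s :=
    (hre.mul hre).add (him.mul him)
  have hq0 : (g s).re * (g s).re + (g s).im * (g s).im ≠ 0 := by
    have := Complex.normSq_pos.mpr hs
    rw [Complex.normSq_apply] at this
    linarith
  have hsqrt := hq.sqrt hq0
  have hr : Real.sqrt ((g s).re * (g s).re + (g s).im * (g s).im) = ‖g s‖ := by
    rw [Complex.norm_def, Complex.normSq_apply]
  have hr0 : ‖g s‖ ≠ 0 := norm_ne_zero_iff.mpr hs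
  have hinv := hsqrt.inv (by rw [hr]; exact hr0)
  have h2 := hinv.smul hgd
  rw [hr] at h2
  refine HasDerivAt.congr_of_eventuallyEq (h2.congr_deriv ?_) (Filter.Eventually.of_forall fun x => ?_)
  · rw [Pi.inv_apply, hr]
    congr 1
    congr 1
    rw [cdot]
    field_simp
    ring
  · simp [Complex.norm_def, Complex.normSq_apply]

lemma diff_deriv {γ : ℝ → ℂ} (hγ : ContDiff ℝ (⊤ : ℕ∞) γ) : Differentiable ℝ (deriv γ) :=
  (contDiff_infty_iff_deriv.mp (contDiff_infty_iff_deriv.mp hγ).2).1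

lemma curvC_eq {γ : ℝ → ℂ} (hγ : ContDiff ℝ (⊤ : ℕ∞) γ) {s : ℝ} (hs : deriv γ s ≠ 0) :
    curvC γ s = curvF (deriv γ s) (deriv (deriv γ) s) := by
  unfold curvC curvF
  congr 1
  exact (hasDerivAt_T (deriv γ) (diff_deriv hγ) s hs).deriv

lemma perpC_eq (γ : ℝ → ℂ) (s : ℝ) : perpC γ s = perpF (γ s) (deriv γ s) := rfl

lemma continuousAt_cdot2 {α : Type*} [TopologicalSpace α] {f g : α → ℂ} {x : α}
    (hf : ContinuousAt f x) (hg : ContinuousAt g x) :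
    ContinuousAt (fun q => cdot (f q) (g q)) x := by
  unfold cdot
  exact ((Complex.continuous_re.continuousAt.comp hf).mul
      (Complex.continuous_re.continuousAt.comp hg)).add
    ((Complex.continuous_im.continuousAt.comp hf).mul
      (Complex.continuous_im.continuousAt.comp hg))

lemma continuousAt_phiF {p : ℂ × ℂ × ℂ} (h0 : p.2.1 ≠ 0) : ContinuousAt phiF p := by
  have hw : ContinuousAt (fun q : ℂ × ℂ × ℂ => q.1) p := continuous_fst.continuousAt
  have hz : ContinuousAt (fun q : ℂ × ℂ × ℂ => q.2.1) p :=
    (continuous_fst.comp continuous_snd).continuousAt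
  have hu : ContinuousAt (fun q : ℂ × ℂ × ℂ => q.2.2) p :=
    (continuous_snd.comp continuous_snd).continuousAt
  have hn : ContinuousAt (fun q : ℂ × ℂ × ℂ => ‖q.2.1‖) p := hz.norm
  have hn0 : ‖p.2.1‖ ≠ 0 := norm_ne_zero_iff.mpr h0
  have hni : ContinuousAt (fun q : ℂ × ℂ × ℂ => (‖q.2.1‖)⁻¹) p := hn.inv₀ hn0
  have hcurv : ContinuousAt (fun q : ℂ × ℂ × ℂ => curvF q.2.1 q.2.2) p := by
    unfold curvF
    exact hni.smul ((hni.smul hu).add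
      (((continuousAt_cdot2 hz hu).neg.div (hn.pow 3) (pow_ne_zero 3 hn0)).smul hz))
  have hnu : ContinuousAt (fun q : ℂ × ℂ × ℂ => (‖q.2.1‖)⁻¹ • (Complex.I * q.2.1)) p :=
    hni.smul (continuousAt_const.mul hz)
  have hperp : ContinuousAt (fun q : ℂ × ℂ × ℂ => perpF q.1 q.2.1) p := by
    unfold perpF
    exact (continuousAt_cdot2 hw hnu).smul hnu
  unfold phiF
  exact ((hcurv.norm.pow 2).add (hperp.norm.pow 2)).mul hn

lemma decomp (u w : ℂ) (hu : ‖u‖ = 1) (h : cdot w (Complex.I * u) = 0) :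
    w = (cdot w u) • u := by
  have hn : u.re * u.re + u.im * u.im = 1 := by
    have h1 : Complex.normSq u = 1 := by
      rw [Complex.normSq_eq_norm_sq, hu]; norm_num
    rwa [Complex.normSq_apply] at h1
  rw [cdot] at h
  simp only [Complex.mul_re, Complex.mul_im, Complex.I_re, Complex.I_im] at h
  apply Complex.ext <;>
    simp only [cdot, Complex.real_smul, Complex.mul_re, Complex.mul_im,
      Complex.ofReal_re, Complex.ofReal_im]
  · linear_combination (-w.re) * hn - u.im * h
  · linear_combination (-w.im) * hn + u.re * h

/-- continuous nonneg on Icc, a.e. zero on Ioc, a<b ⇒ zero on Icc -/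
lemma eq_zero_on_Icc {a b : ℝ} (hab : a < b) {f : ℝ → ℝ}
    (hfc : ContinuousOn f (Icc a b))
    (hae : ∀ᵐ s ∂(MeasureTheory.volume.restrict (Ioc a b)), f s = 0) :
    ∀ s ∈ Icc a b, f s = 0 := by
  intro s hs
  by_contra hne
  -- f s ≠ 0; continuity gives a ball where |f| > |f s|/2
  have hcw := hfc s hs
  have hpos : 0 < |f s| := abs_pos.mpr hne
  have h1 : {t : ℝ | |f t| > |f s| / 2} ∈ 𝓝[Icc a b] s := by
    have : Tendsto f (𝓝[Icc a b] s) (𝓝 (f s)) := hcw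
    have : Tendsto (fun t => |f t|) (𝓝[Icc a b] s) (𝓝 |f s|) := this.abs
    exact this (Ioi_mem_nhds (by linarith))
  rw [mem_nhdsWithin] at h1
  obtain ⟨U, hUopen, hsU, hUsub⟩ := h1
  obtain ⟨ε, hε, hball⟩ := Metric.isOpen_iff.mp hUopen s hsU
  set c := max a (s - ε)
  set d := min b (s + ε)
  have hcd : c < d := by
    rcases hs with ⟨hsa, hsb⟩
    apply max_lt <;> [skip; skip] <;> apply lt_min <;> [exact hab; linarith; linarith; linarith]
  have hsub : Ioo c d ⊆ {t | f t ≠ 0} ∩ Ioc a b := by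
    intro t ht
    have hta : a < t := lt_of_le_of_lt (le_max_left _ _) ht.1
    have htb : t ≤ b := le_of_lt (lt_of_lt_of_le ht.2 (min_le_left _ _))
    have htI : t ∈ Icc a b := ⟨hta.le, htb⟩
    have htball : t ∈ Metric.ball s ε := by
      rw [Metric.mem_ball, Real.dist_eq, abs_lt]
      constructor
      · have := lt_of_le_of_lt (le_max_right a (s - ε)) ht.1; linarith
      · have := lt_of_lt_of_le ht.2 (min_le_right b (s + ε)); linarith
    have h2 : |f t| > |f s| / 2 := hUsub ⟨hball htball, htI⟩
    refine ⟨fun h0 => ?_, hta, htb⟩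
    rw [h0] at h2; simp at h2; linarith
  have hnull : MeasureTheory.volume.restrict (Ioc a b) {t | f t ≠ 0} = 0 := by
    rw [← MeasureTheory.ae_iff] at *
    exact hae
  rw [MeasureTheory.Measure.restrict_apply' measurableSet_Ioc] at hnull
  have : MeasureTheory.volume (Ioo c d) = 0 :=
    MeasureTheory.measure_mono_null hsub hnull
  rw [Real.volume_Ioo] at this
  exact absurd this (by simp [hcd, ENNReal.ofReal_eq_zero, not_le])

/-- If curves `γᵢ` converge in `C¹` (away from the origin) to `γ` and
`∫(|k⃗|² + |γ⊥|²) dH¹ → 0`, then the limit curve is a straight segment lying on a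
line through the origin. -/
theorem limit_is_line_through_origin (a b : ℝ) (hab : a < b)
    (γi : ℕ → ℝ → ℂ) (γ : ℝ → ℂ)
    (hsm : ∀ i, ContDiff ℝ (⊤ : ℕ∞) (γi i)) (hγ : ContDiff ℝ (⊤ : ℕ∞) γ)
    (hregi : ∀ i, ∀ s ∈ Icc a b, deriv (γi i) s ≠ 0)
    (hreg : ∀ s ∈ Icc a b, deriv γ s ≠ 0)
    (hne0 : ∀ s ∈ Icc a b, γ s ≠ 0)
    (hconv0 : TendstoUniformlyOn (fun i => γi i) γ atTop (Icc a b))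
    (hconv1 : TendstoUniformlyOn (fun i => deriv (γi i)) (deriv γ) atTop (Icc a b))
    (hconv2 : TendstoUniformlyOn (fun i => deriv (deriv (γi i))) (deriv (deriv γ))
      atTop (Icc a b))
    (hint : Tendsto
      (fun i => ∫ s in a..b,
        (‖curvC (γi i) s‖ ^ 2 + ‖perpC (γi i) s‖ ^ 2) * ‖deriv (γi i) s‖)
      atTop (𝓝 0)) :
    ∃ v : ℂ, v ≠ 0 ∧ ∀ s ∈ Icc a b, ∃ r : ℝ, γ s = r • v := by
  classical
  have hγ' : ContDiff ℝ (⊤ : ℕ∞) γ := hγ.of_le (mod_cast le_top)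
  have hsm' : ∀ i, ContDiff ℝ (⊤ : ℕ∞) (γi i) := fun i => (hsm i).of_le (mod_cast le_top)
  have hdγ : Differentiable ℝ γ := (contDiff_infty_iff_deriv.mp hγ').1
  have hgC : ContDiff ℝ (⊤ : ℕ∞) (deriv γ) := (contDiff_infty_iff_deriv.mp hγ').2
  have hgdiff : Differentiable ℝ (deriv γ) := (contDiff_infty_iff_deriv.mp hgC).1
  have hg'C : ContDiff ℝ (⊤ : ℕ∞) (deriv (deriv γ)) := (contDiff_infty_iff_deriv.mp hgC).2
  set f : ℝ → ℝ := fun s => (‖curvC γ s‖ ^ 2 + ‖perpC γ s‖ ^ 2) * ‖deriv γ s‖ with hf_def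
  set F : ℕ → ℝ → ℝ := fun i s =>
    (‖curvC (γi i) s‖ ^ 2 + ‖perpC (γi i) s‖ ^ 2) * ‖deriv (γi i) s‖ with hF_def
  set m : ℝ → ℂ × ℂ × ℂ := fun s => (γ s, deriv γ s, deriv (deriv γ) s) with hm_def
  set mi : ℕ → ℝ → ℂ × ℂ × ℂ := fun i s =>
    (γi i s, deriv (γi i) s, deriv (deriv (γi i)) s) with hmi_def
  have hmcont : Continuous m :=
    hdγ.continuous.prodMk (hgdiff.continuous.prodMk hg'C.continuous)
  have hmicont : ∀ i, Continuous (mi i) := by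
    intro i
    have h1 := contDiff_infty_iff_deriv.mp (hsm' i)
    have h2 := contDiff_infty_iff_deriv.mp h1.2
    exact h1.1.continuous.prodMk (h2.1.continuous.prodMk h2.2.continuous)
  have hfeq : ∀ s ∈ Icc a b, f s = phiF (m s) := by
    intro s hs
    simp only [hf_def, hm_def, phiF]
    rw [curvC_eq hγ' (hreg s hs), perpC_eq]
  have hFeq : ∀ i, ∀ s ∈ Icc a b, F i s = phiF (mi i s) := by
    intro i s hs
    simp only [hF_def, hmi_def, phiF]
    rw [curvC_eq (hsm' i) (hregi i s hs), perpC_eq]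
  have hfcont : ContinuousOn f (Icc a b) := by
    intro s hs
    have h1 : ContinuousWithinAt (fun t => phiF (m t)) (Icc a b) s :=
      (continuousAt_phiF (show (m s).2.1 ≠ 0 from hreg s hs)).comp_continuousWithinAt
        hmcont.continuousWithinAt
    exact h1.congr (fun t ht => hfeq t ht) (hfeq s hs)
  have hFcont : ∀ i, ContinuousOn (F i) (Icc a b) := by
    intro i s hs
    have h1 : ContinuousWithinAt (fun t => phiF (mi i t)) (Icc a b) s :=
      (continuousAt_phiF (show (mi i s).2.1 ≠ 0 from hregi i s hs)).comp_continuousWithinAt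
        (hmicont i).continuousWithinAt
    exact h1.congr (fun t ht => hFeq i t ht) (hFeq i s hs)
  have hpt : ∀ s ∈ Icc a b, Tendsto (fun i => F i s) atTop (𝓝 (f s)) := by
    intro s hs
    have h0 := hconv0.tendsto_at hs
    have h1 := hconv1.tendsto_at hs
    have h2 := hconv2.tendsto_at hs
    have htriple : Tendsto (fun i => mi i s) atTop (𝓝 (m s)) :=
      h0.prodMk_nhds (h1.prodMk_nhds h2)
    have hphi := (continuousAt_phiF (show (m s).2.1 ≠ 0 from hreg s hs)).tendsto.comp htriple
    rw [hfeq s hs]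
    exact hphi.congr (fun i => (hFeq i s hs).symm)
  -- Fatou argument
  set μ := MeasureTheory.volume.restrict (Ioc a b) with hμ_def
  have hInt : ∀ i, MeasureTheory.IntegrableOn (F i) (Ioc a b) := fun i =>
    ((hFcont i).integrableOn_Icc).mono_set Ioc_subset_Icc_self
  have hFnn : ∀ i s, 0 ≤ F i s := by
    intro i s; simp only [hF_def]; positivity
  have hfnn : ∀ s, 0 ≤ f s := by
    intro s; simp only [hf_def]; positivity
  have hlin : ∀ i, ∫⁻ s, ENNReal.ofReal (F i s) ∂μ = ENNReal.ofReal (∫ s, F i s ∂μ) :=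
    fun i => (MeasureTheory.ofReal_integral_eq_lintegral_ofReal (hInt i)
      (MeasureTheory.ae_of_all _ (hFnn i))).symm
  have hFm : ∀ i, AEMeasurable (fun s => ENNReal.ofReal (F i s)) μ := fun i =>
    (ContinuousOn.aemeasurable ((hFcont i).mono Ioc_subset_Icc_self)
      measurableSet_Ioc).ennreal_ofReal
  have hIμ : ∀ i, ∫ s, F i s ∂μ = ∫ s in a..b, F i s := fun i =>
    (intervalIntegral.integral_of_le hab.le).symm
  have hIl : Tendsto (fun i => ENNReal.ofReal (∫ s, F i s ∂μ)) atTop (𝓝 0) := by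
    have h := ENNReal.tendsto_ofReal hint
    rw [ENNReal.ofReal_zero] at h
    exact h.congr (fun i => by rw [hIμ i])
  have hzero : ∫⁻ s, ENNReal.ofReal (f s) ∂μ = 0 := by
    refine le_antisymm ?_ zero_le
    calc ∫⁻ s, ENNReal.ofReal (f s) ∂μ
        = ∫⁻ s, liminf (fun i => ENNReal.ofReal (F i s)) atTop ∂μ := by
          refine MeasureTheory.lintegral_congr_ae ?_
          refine (MeasureTheory.ae_restrict_iff' measurableSet_Ioc).2
            (MeasureTheory.ae_of_all _ fun s hs => ?_)
          exact ((ENNReal.tendsto_ofReal (hpt s (Ioc_subset_Icc_self hs))).liminf_eq).symm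
      _ ≤ liminf (fun i => ∫⁻ s, ENNReal.ofReal (F i s) ∂μ) atTop :=
          MeasureTheory.lintegral_liminf_le' hFm
      _ = liminf (fun i => ENNReal.ofReal (∫ s, F i s ∂μ)) atTop := by
          simp only [hlin]
      _ = 0 := hIl.liminf_eq
  have hfm : AEMeasurable (fun s => ENNReal.ofReal (f s)) μ :=
    (ContinuousOn.aemeasurable (hfcont.mono Ioc_subset_Icc_self)
      measurableSet_Ioc).ennreal_ofReal
  have hae0 : ∀ᵐ s ∂μ, ENNReal.ofReal (f s) = 0 :=
    (MeasureTheory.lintegral_eq_zero_iff' hfm).mp hzero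
  have hae : ∀ᵐ s ∂μ, f s = 0 := by
    filter_upwards [hae0] with s hs
    have := ENNReal.ofReal_eq_zero.mp hs
    linarith [hfnn s]
  have hf0 : ∀ s ∈ Icc a b, f s = 0 := eq_zero_on_Icc hab hfcont hae
  -- extract vanishing of curvature and perp
  have hvanish : ∀ s ∈ Icc a b, curvC γ s = 0 ∧ perpC γ s = 0 := by
    intro s hs
    have h1 := hf0 s hs
    have hns : ‖deriv γ s‖ ≠ 0 := norm_ne_zero_iff.mpr (hreg s hs)
    simp only [hf_def] at h1
    rcases mul_eq_zero.mp h1 with h2 | h2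
    · have hc2 : ‖curvC γ s‖ ^ 2 = 0 ∧ ‖perpC γ s‖ ^ 2 = 0 :=
        (add_eq_zero_iff_of_nonneg (by positivity) (by positivity)).mp h2
      exact ⟨norm_eq_zero.mp (sq_eq_zero_iff.mp hc2.1),
        norm_eq_zero.mp (sq_eq_zero_iff.mp hc2.2)⟩
    · exact absurd h2 hns
  -- the unit tangent is constant
  set T : ℝ → ℂ := fun σ => (‖deriv γ σ‖)⁻¹ • deriv γ σ with hT_def
  have hT : ∀ s ∈ Icc a b, HasDerivAt T 0 s := by
    intro s hs
    have hd := hasDerivAt_T (deriv γ) hgdiff s (hreg s hs)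
    have hns : (‖deriv γ s‖)⁻¹ ≠ 0 := inv_ne_zero (norm_ne_zero_iff.mpr (hreg s hs))
    have hc0 : curvC γ s = 0 := (hvanish s hs).1
    unfold curvC at hc0
    rw [hd.deriv] at hc0
    rcases smul_eq_zero.mp hc0 with h | h
    · exact absurd h hns
    · rw [h] at hd; exact hd
  have hconstT : ∀ s ∈ Icc a b, T s = T a :=
    constant_of_has_deriv_right_zero
      (fun s hs => (hT s hs).continuousAt.continuousWithinAt)
      (fun s hs => (hT s (Ico_subset_Icc_self hs)).hasDerivWithinAt)
  set u : ℂ := T a with hu_def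
  have hga : deriv γ a ≠ 0 := hreg a ⟨le_refl a, hab.le⟩
  have hu1 : ‖u‖ = 1 := by
    simp only [hu_def, hT_def, norm_smul, norm_inv, norm_norm]
    exact inv_mul_cancel₀ (norm_ne_zero_iff.mpr hga)
  refine ⟨u, fun h => by simp [h] at hu1, fun s hs => ⟨cdot (γ s) u, ?_⟩⟩
  have hTs : T s = u := hconstT s hs
  have hnu : nuC γ s = Complex.I * u := by
    rw [← hTs]
    simp only [hT_def, nuC]
    rw [mul_smul_comm]
  have hnu1 : ‖nuC γ s‖ = 1 := by
    rw [hnu, norm_mul, Complex.norm_I, one_mul, hu1]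
  have hperp : perpC γ s = 0 := (hvanish s hs).2
  unfold perpC at hperp
  rcases smul_eq_zero.mp hperp with h | h
  · rw [hnu] at h
    exact decomp u (γ s) hu1 h
  · rw [h] at hnu1; simp at hnu1
end
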